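/- For n = 2 in the filament problem, the determinant of the 4×4 Hermitian matrix m_1(μ, ν) at ν = 0 equals −3μ²(μ+1/2)²(μ+5/4); hence det m_1(μ,0) < 0 for μ > −5/4 with μ ∉ {0, −1/2}, while det m_1(μ,ν) → +∞ as ν → ∞ for μ ≠ 0, so for each such μ > −5/4 and any real γ there exists ν_1 > 0 with det m_1(μ, ν_1) = 0. -/

import Mathlib

open Matrix Complex

/-- The `k = 1` Fourier block of the filament problem for `n = 2`. -/
noncomputable def m₁n2F (γ μ ν : ℝ) : Matrix (Fin 4) (Fin 4) ℂ :=
  !![(μ * (μ * ν ^ 2 + μ + 5 / 2) : ℝ), -(2 * Complex.I * ν * γ * μ), (-(Real.sqrt 2 * μ) : ℝ), 0;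
     2 * Complex.I * ν * γ * μ, (μ * (μ * ν ^ 2 + μ - 3 / 2) : ℝ), 0, (Real.sqrt 2 * μ : ℝ);
     (-(Real.sqrt 2 * μ) : ℝ), 0, (ν ^ 2 + 2 * μ + 1 / 2 : ℝ), -(2 * Complex.I * ν * γ);
     0, (Real.sqrt 2 * μ : ℝ), 2 * Complex.I * ν * γ, (ν ^ 2 + 1 / 2 : ℝ)]

/-!
The determinant of the Hermitian matrix `m₁n2F γ μ ν` is real and only depends on `t = ν ^ 2`: it is
a quartic in `t` with leading coefficient `μ ^ 4` and constant term `-3 μ² (μ + 1/2)² (μ + 5/4)`.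
For `μ > -5/4`, `μ ∉ {0, -1/2}` this quartic is negative at `t = 0` and tends to `+∞`, so the
intermediate value theorem gives a zero at some `ν > 0`.
-/

open Filter Polynomial

lemma tendsto_quartic_atTop {a : ℝ} (ha : 0 < a) (b c d e : ℝ) :
    Tendsto (fun t : ℝ => a * t ^ 4 + b * t ^ 3 + c * t ^ 2 + d * t + e) atTop atTop := by
  let p : ℝ[X] := C a * X ^ 4 + C b * X ^ 3 + C c * X ^ 2 + C d * X + C e
  have hdeg : p.natDegree = 4 := by
    unfold p
    compute_degree!
    exact ha.ne'
  have hlead : p.leadingCoeff = a := by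
    rw [leadingCoeff, hdeg]
    simp [p]
  have hpos : 0 < p.degree := natDegree_pos_iff_degree_pos.mp (by omega)
  simpa [p] using p.tendsto_atTop_of_leadingCoeff_nonneg hpos (hlead ▸ ha.le)

lemma neg_three_mul_sq_mul_sq_mul_neg {μ : ℝ} (h : -5 / 4 < μ) (h₀ : μ ≠ 0) (h₁ : μ ≠ -1 / 2) :
    -3 * μ ^ 2 * (μ + 1 / 2) ^ 2 * (μ + 5 / 4) < 0 := by
  have h₁' : μ + 1 / 2 ≠ 0 := fun h' => h₁ (by linarith)
  have := mul_pos (mul_pos (sq_pos_of_ne_zero h₀) (sq_pos_of_ne_zero h₁'))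
    (by linarith : 0 < μ + 5 / 4)
  linarith

noncomputable def m₁n2FDet (γ μ t : ℝ) : ℝ :=
  μ ^ 4 * t ^ 4
  + (μ ^ 3 * (μ + 1) * (2 * μ + 1) - 4 * γ ^ 2 * μ ^ 2 * (μ ^ 2 + 1)) * t ^ 3
  + (μ ^ 2 * (5 * μ ^ 3 + 5 / 4 * μ ^ 2 + 2 * μ - 15 / 4) - 4 * γ ^ 2 * μ ^ 2 * (μ + 1) * (2 * μ + 1)
      + 16 * γ ^ 4 * μ ^ 2) * t ^ 2
  + (-3 / 4 * μ ^ 2 * (2 * μ + 1) * (μ + 5) + 2 * γ ^ 2 * μ ^ 2 * (7 + 4 * μ - 2 * μ ^ 2)) * t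
  + -3 * μ ^ 2 * (μ + 1 / 2) ^ 2 * (μ + 5 / 4)

lemma det_m₁n2F (γ μ ν : ℝ) : (m₁n2F γ μ ν).det = m₁n2FDet γ μ (ν ^ 2) := by
  have hs : ((Real.sqrt 2 : ℝ) : ℂ) ^ 2 = 2 := by
    rw [← ofReal_pow, Real.sq_sqrt zero_le_two, ofReal_ofNat]
  have hs4 : ((Real.sqrt 2 : ℝ) : ℂ) ^ 4 = 4 := by
    rw [show 4 = 2 * 2 from rfl, pow_mul, hs]
    norm_num
  rw [det_succ_row_zero]
  simp only [m₁n2F, m₁n2FDet, Fin.sum_univ_four, det_fin_three, submatrix_apply, of_apply,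
    Fin.succAbove, cons_val', cons_val, Fin.val_zero, Fin.val_one, Fin.val_two]
  push_cast
  ring_nf
  simp only [hs, hs4, I_sq, I_pow_four]
  ring

lemma m₁n2FDet_zero (γ μ : ℝ) :
    m₁n2FDet γ μ 0 = -3 * μ ^ 2 * (μ + 1 / 2) ^ 2 * (μ + 5 / 4) := by
  simp [m₁n2FDet]

lemma continuous_m₁n2FDet (γ μ : ℝ) : Continuous (m₁n2FDet γ μ) := by
  unfold m₁n2FDet
  fun_prop

lemma tendsto_m₁n2FDet_atTop (γ : ℝ) {μ : ℝ} (hμ : μ ≠ 0) :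
    Tendsto (m₁n2FDet γ μ) atTop atTop :=
  tendsto_quartic_atTop (by positivity) _ _ _ _

theorem filament_n2_bifurcation (γ : ℝ) :
    (∀ μ : ℝ, (m₁n2F γ μ 0).det =
      ((-3 * μ ^ 2 * (μ + 1 / 2) ^ 2 * (μ + 5 / 4) : ℝ) : ℂ)) ∧
    (∀ μ : ℝ, μ > -5 / 4 → μ ≠ 0 → μ ≠ -1 / 2 →
      (-3 * μ ^ 2 * (μ + 1 / 2) ^ 2 * (μ + 5 / 4) : ℝ) < 0) ∧
    (∀ μ : ℝ, μ ≠ 0 →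
      Filter.Tendsto (fun ν : ℝ => ((m₁n2F γ μ ν).det).re) Filter.atTop Filter.atTop) ∧
    (∀ μ : ℝ, μ > -5 / 4 → μ ≠ 0 → μ ≠ -1 / 2 →
      ∃ ν₁ : ℝ, 0 < ν₁ ∧ (m₁n2F γ μ ν₁).det = 0) := by
  have htendsto (μ : ℝ) (hμ : μ ≠ 0) : Tendsto (fun ν : ℝ => m₁n2FDet γ μ (ν ^ 2)) atTop atTop :=
    (tendsto_m₁n2FDet_atTop γ hμ).comp (tendsto_pow_atTop two_ne_zero)
  refine ⟨fun μ => ?_, fun μ => neg_three_mul_sq_mul_sq_mul_neg, fun μ hμ => ?_, ?_⟩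
  · rw [det_m₁n2F, zero_pow two_ne_zero, m₁n2FDet_zero]
  · simpa only [det_m₁n2F, ofReal_re] using htendsto μ hμ
  · intro μ h h₀ h₁
    have hneg : m₁n2FDet γ μ (0 ^ 2) < 0 := by
      rw [zero_pow two_ne_zero, m₁n2FDet_zero]
      exact neg_three_mul_sq_mul_sq_mul_neg h h₀ h₁
    have hcont : ContinuousOn (fun ν : ℝ => m₁n2FDet γ μ (ν ^ 2)) (Set.Ici 0) :=
      ((continuous_m₁n2FDet γ μ).comp (continuous_pow 2)).continuousOn
    obtain ⟨ν₁, hν₁, hroot⟩ := intermediate_value_Ioi hcont (htendsto μ h₀) hneg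
    exact ⟨ν₁, hν₁, by rw [det_m₁n2F]; exact_mod_cast hroot⟩
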